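/- arXiv:2206.01892 — 5 statements merged into one kernel-verified Lean document; each statement's English description precedes it below -/
import Mathlib

section
/- Let R be a commutative ring, V the free R-module with basis v₊, v₋, and consider the maps μ : V ⊗ V → V, Δ : V → V ⊗ V, and the signed tensor map (1 ⊗ˢ Δ) defined below. Then, under the canonical associativity isomorphism of triple tensor products, the Frobenius relations hold: (μ ⊗ 1) ∘ (1 ⊗ˢ Δ) = Δ ∘ μ = (1 ⊗ μ) ∘ (Δ ⊗ 1), where μ ⊗ 1, 1 ⊗ μ, and Δ ⊗ 1 denote ordinary tensor product maps with the identity. -/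
/-!
Odd TQFT structure maps on the free module `V = R × R` with basis
`v₊ = (1,0)` (superdegree 0) and `v₋ = (0,1)` (superdegree 1).
-/

open TensorProduct

noncomputable section

variable (R : Type*) [CommRing R]

/-- The basis vector `v₊`. -/
def vp : R × R := (1, 0)

/-- The basis vector `v₋`. -/
def vm : R × R := (0, 1)

/-- The multiplication `μ : V ⊗ V → V`, with `μ(v₊⊗v₊) = v₊`, `μ(v₊⊗v₋) = v₋`,
`μ(v₋⊗v₊) = v₋`, `μ(v₋⊗v₋) = 0`. -/
def mu : (R × R) ⊗[R] (R × R) →ₗ[R] (R × R) :=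
  TensorProduct.lift <| LinearMap.mk₂ R
    (fun x y => (x.1 * y.1, x.1 * y.2 + x.2 * y.1))
    (fun m₁ m₂ n => by ext <;> simp <;> ring)
    (fun c m n => by ext <;> simp <;> ring)
    (fun m n₁ n₂ => by ext <;> simp <;> ring)
    (fun c m n => by ext <;> simp <;> ring)

/-- The comultiplication `Δ : V → V ⊗ V`, with `Δ(v₊) = v₋⊗v₊ - v₊⊗v₋` and
`Δ(v₋) = v₋⊗v₋`. -/
def Del : (R × R) →ₗ[R] (R × R) ⊗[R] (R × R) :=
  LinearMap.coprod
    (LinearMap.toSpanSingleton R ((R × R) ⊗[R] (R × R)) (vm R ⊗ₜ[R] vp R - vp R ⊗ₜ[R] vm R))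
    (LinearMap.toSpanSingleton R ((R × R) ⊗[R] (R × R)) (vm R ⊗ₜ[R] vm R))

/-- The grading involution `σ : V → V`, `σ(v₊) = v₊`, `σ(v₋) = -v₋` (the Koszul sign
operator on the supermodule `V`). -/
def sg : (R × R) →ₗ[R] (R × R) :=
  LinearMap.prodMap LinearMap.id (-LinearMap.id)

/-- The signed tensor map `1 ⊗ˢ Δ : V ⊗ V → V ⊗ (V ⊗ V)`, determined on the basis by
`v₊ ⊗ w ↦ v₊ ⊗ Δ w` and `v₋ ⊗ w ↦ -(v₋ ⊗ Δ w)`; since the Koszul sign is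
`(-1)^{|Δ||x|}` on `x ⊗ w`, this is exactly `σ ⊗ Δ`. -/
def oneTensorS_Del : (R × R) ⊗[R] (R × R) →ₗ[R] (R × R) ⊗[R] ((R × R) ⊗[R] (R × R)) :=
  TensorProduct.map (sg R) (Del R)

set_option maxHeartbeats 1000000 in
/-- Frobenius relations: `(μ ⊗ 1) ∘ (1 ⊗ˢ Δ) = Δ ∘ μ = (1 ⊗ μ) ∘ (Δ ⊗ 1)`, under the
canonical associativity isomorphism of triple tensor products. -/
theorem frobenius_relations :
    (TensorProduct.map (mu R) LinearMap.id) ∘ₗ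
        (TensorProduct.assoc R (R × R) (R × R) (R × R)).symm.toLinearMap ∘ₗ
        oneTensorS_Del R
      = Del R ∘ₗ mu R ∧
    Del R ∘ₗ mu R
      = (TensorProduct.map LinearMap.id (mu R)) ∘ₗ
          (TensorProduct.assoc R (R × R) (R × R) (R × R)).toLinearMap ∘ₗ
          (TensorProduct.map (Del R) LinearMap.id) := by
  classical
  -- componentwise embedding φ : V ⊗ V → V × V, x ⊗ y ↦ (x.1 • y, x.2 • y)
  set φ : (R × R) ⊗[R] (R × R) →ₗ[R] (R × R) × (R × R) :=
    TensorProduct.lift <| LinearMap.mk₂ R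
      (fun x y => (x.1 • y, x.2 • y))
      (fun m₁ m₂ n => by ext <;> simp [add_smul] <;> ring)
      (fun c m n => by ext <;> simp [smul_smul] <;> ring)
      (fun m n₁ n₂ => by ext <;> simp <;> ring)
      (fun c m n => by ext <;> simp [smul_smul] <;> ring) with hφ
  set ψ : (R × R) × (R × R) →ₗ[R] (R × R) ⊗[R] (R × R) :=
    LinearMap.coprod (TensorProduct.mk R (R × R) (R × R) (vp R))
      (TensorProduct.mk R (R × R) (R × R) (vm R)) with hψ
  have hleft : ∀ t, ψ (φ t) = t := by
    intro t
    induction t using TensorProduct.induction_on with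
    | zero => simp
    | tmul x y =>
      simp only [hφ, hψ, TensorProduct.lift.tmul, LinearMap.mk₂_apply,
        LinearMap.coprod_apply, TensorProduct.mk_apply, TensorProduct.tmul_smul,
        ← TensorProduct.smul_tmul', ← TensorProduct.add_tmul]
      rw [TensorProduct.smul_tmul', TensorProduct.smul_tmul', ← TensorProduct.add_tmul]
      congr 1
      ext <;> simp [vp, vm]
    | add a b ha hb => simp [map_add, ha, hb]
  have hinj : ∀ (f g : (R × R) ⊗[R] (R × R) →ₗ[R] (R × R) ⊗[R] (R × R)),
      φ ∘ₗ f = φ ∘ₗ g → f = g := by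
    intro f g h
    apply LinearMap.ext
    intro t
    have h2 : φ (f t) = φ (g t) := congrFun (congrArg (DFunLike.coe) h) t
    calc f t = ψ (φ (f t)) := (hleft _).symm
      _ = ψ (φ (g t)) := by rw [h2]
      _ = g t := hleft _
  have key : ∀ (f g : (R × R) ⊗[R] (R × R) →ₗ[R] (R × R) ⊗[R] (R × R)),
      (∀ x y : R × R, φ (f (x ⊗ₜ[R] y)) = φ (g (x ⊗ₜ[R] y))) → f = g := by
    intro f g h
    refine hinj f g ?_
    exact TensorProduct.ext' fun x y => h x y
  constructor <;>
  · refine key _ _ fun x y => ?_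
    simp only [mu, Del, sg, oneTensorS_Del, vp, vm, hφ, LinearMap.comp_apply,
      TensorProduct.tmul_add, TensorProduct.add_tmul, TensorProduct.tmul_smul,
      TensorProduct.smul_tmul', map_add, map_smul, map_sub, TensorProduct.map_tmul,
      TensorProduct.lift.tmul, LinearMap.mk₂_apply, LinearMap.coprod_apply,
      LinearMap.toSpanSingleton_apply, LinearMap.prodMap_apply, LinearMap.id_apply,
      LinearMap.neg_apply, TensorProduct.assoc_tmul, TensorProduct.assoc_symm_tmul,
      LinearEquiv.coe_coe, smul_sub, TensorProduct.tmul_sub, TensorProduct.sub_tmul,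
      TensorProduct.neg_tmul, TensorProduct.tmul_neg, smul_add, smul_smul,
      Prod.smul_mk, smul_eq_mul, Prod.neg_mk, Prod.mk_add_mk, Prod.mk_sub_mk]
    ext <;> simp <;> ring

end
end

section
/- Let k be an algebraically closed field of characteristic zero, V a nonzero finite-dimensional k-vector space, and H₁, H₂, E, F linear endomorphisms of V satisfying the gl(1|1) relations. If V is irreducible, i.e. the only subspaces W ⊆ V satisfying H₁(W) ⊆ W, H₂(W) ⊆ W, E(W) ⊆ W, and F(W) ⊆ W are W = 0 and W = V, then dim V ≤ 2. -/
/-!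
Every nonzero finite-dimensional irreducible representation of `gl(1|1)` over an
algebraically closed field of characteristic zero is at most 2-dimensional.  Here a
`gl(1|1)`-action is a quadruple of linear endomorphisms `H₁, H₂, E, F` satisfying the
operator relations below, and irreducibility means that the only subspaces invariant
under all four operators are `0` and `V`.
-/

theorem gl11_irreducible_dim_le_two
    {k V : Type*} [Field k] [IsAlgClosed k] [CharZero k]
    [AddCommGroup V] [Module k V] [FiniteDimensional k V] [Nontrivial V]
    (H₁ H₂ E F : V →ₗ[k] V)
    (hComm : H₁ ∘ₗ H₂ = H₂ ∘ₗ H₁)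
    (h1E : H₁ ∘ₗ E - E ∘ₗ H₁ = E)
    (h2E : H₂ ∘ₗ E - E ∘ₗ H₂ = -E)
    (h1F : H₁ ∘ₗ F - F ∘ₗ H₁ = -F)
    (h2F : H₂ ∘ₗ F - F ∘ₗ H₂ = F)
    (hEF : E ∘ₗ F + F ∘ₗ E = H₁ + H₂)
    (hEE : E ∘ₗ E = 0)
    (hFF : F ∘ₗ F = 0)
    (hirr : ∀ W : Submodule k V,
      (∀ x ∈ W, H₁ x ∈ W) → (∀ x ∈ W, H₂ x ∈ W) →
      (∀ x ∈ W, E x ∈ W) → (∀ x ∈ W, F x ∈ W) → W = ⊥ ∨ W = ⊤) :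
    Module.finrank k V ≤ 2 := by
  have pComm : ∀ x, H₁ (H₂ x) = H₂ (H₁ x) := fun x => LinearMap.congr_fun hComm x
  have e1E : ∀ x, H₁ (E x) = E x + E (H₁ x) := fun x => by
    have := LinearMap.congr_fun h1E x
    simp only [LinearMap.sub_apply, LinearMap.comp_apply] at this
    exact eq_add_of_sub_eq this
  have e2E : ∀ x, H₂ (E x) = -E x + E (H₂ x) := fun x => by
    have := LinearMap.congr_fun h2E x
    simp only [LinearMap.sub_apply, LinearMap.comp_apply, LinearMap.neg_apply] at this
    exact eq_add_of_sub_eq this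
  have e1F : ∀ x, H₁ (F x) = -F x + F (H₁ x) := fun x => by
    have := LinearMap.congr_fun h1F x
    simp only [LinearMap.sub_apply, LinearMap.comp_apply, LinearMap.neg_apply] at this
    exact eq_add_of_sub_eq this
  have e2F : ∀ x, H₂ (F x) = F x + F (H₂ x) := fun x => by
    have := LinearMap.congr_fun h2F x
    simp only [LinearMap.sub_apply, LinearMap.comp_apply] at this
    exact eq_add_of_sub_eq this
  have eEF : ∀ x, E (F x) + F (E x) = H₁ x + H₂ x := fun x => by
    have := LinearMap.congr_fun hEF x
    simpa only [LinearMap.add_apply, LinearMap.comp_apply] using this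
  have eEE : ∀ x, E (E x) = 0 := fun x => by
    have := LinearMap.congr_fun hEE x
    simpa only [LinearMap.comp_apply, LinearMap.zero_apply] using this
  have eFF : ∀ x, F (F x) = 0 := fun x => by
    have := LinearMap.congr_fun hFF x
    simpa only [LinearMap.comp_apply, LinearMap.zero_apply] using this
  -- Step 1: H₁ + H₂ acts as a scalar c
  obtain ⟨c, hc⟩ := Module.End.exists_eigenvalue (H₁ + H₂ : V →ₗ[k] V)
  have hscalar : ∀ x : V, H₁ x + H₂ x = c • x := by
    set W0 := Module.End.eigenspace (H₁ + H₂ : V →ₗ[k] V) c with hW0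
    have mem0 : ∀ x, x ∈ W0 ↔ H₁ x + H₂ x = c • x := fun x => by
      rw [hW0, Module.End.mem_eigenspace_iff]; simp [LinearMap.add_apply]
    have inv1 : ∀ x ∈ W0, H₁ x ∈ W0 := fun x hx => by
      rw [mem0] at hx ⊢
      have : H₁ (H₁ x) + H₂ (H₁ x) = H₁ (H₁ x + H₂ x) := by
        rw [map_add, pComm x]
      rw [this, hx, map_smul]
    have inv2 : ∀ x ∈ W0, H₂ x ∈ W0 := fun x hx => by
      rw [mem0] at hx ⊢
      have : H₁ (H₂ x) + H₂ (H₂ x) = H₂ (H₁ x + H₂ x) := by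
        rw [map_add, pComm x]
      rw [this, hx, map_smul]
    have invE : ∀ x ∈ W0, E x ∈ W0 := fun x hx => by
      rw [mem0] at hx ⊢
      rw [e1E, e2E]
      have : E x + E (H₁ x) + (-E x + E (H₂ x)) = E (H₁ x + H₂ x) := by
        rw [map_add]; abel
      rw [this, hx, map_smul]
    have invF : ∀ x ∈ W0, F x ∈ W0 := fun x hx => by
      rw [mem0] at hx ⊢
      rw [e1F, e2F]
      have : -F x + F (H₁ x) + (F x + F (H₂ x)) = F (H₁ x + H₂ x) := by
        rw [map_add]; abel
      rw [this, hx, map_smul]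
    rcases hirr W0 inv1 inv2 invE invF with h | h
    · exact absurd h hc
    · intro x
      have : x ∈ W0 := h ▸ Submodule.mem_top
      exact (mem0 x).mp this
  -- Step 2: find an eigenvector of H₁ inside ker E
  set N := LinearMap.ker E with hN
  have hNne : N ≠ ⊥ := by
    by_cases hE0 : E = 0
    · rw [hN, hE0, LinearMap.ker_zero]
      exact top_ne_bot
    · obtain ⟨x, hx⟩ : ∃ x, E x ≠ 0 := by
        by_contra h
        push_neg at h
        exact hE0 (LinearMap.ext fun x => by simpa using h x)
      intro hb
      have : E x ∈ N := by rw [hN, LinearMap.mem_ker]; exact eEE x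
      rw [hb, Submodule.mem_bot] at this
      exact hx this
  have hmap : ∀ x ∈ N, H₁ x ∈ N := fun x hx => by
    rw [hN, LinearMap.mem_ker] at hx ⊢
    have := e1E x
    rw [hx, map_zero, zero_add] at this
    exact this.symm
  haveI : Nontrivial N := Submodule.nontrivial_iff_ne_bot.mpr hNne
  set g : N →ₗ[k] N := H₁.restrict hmap with hg
  obtain ⟨μ, hμ⟩ := Module.End.exists_eigenvalue g
  obtain ⟨w, hw⟩ := hμ.exists_hasEigenvector
  set v : V := (w : V) with hv
  have hvE : E v = 0 := LinearMap.mem_ker.mp w.2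
  have hvne : v ≠ 0 := fun h => hw.2 (by ext; exact h)
  have hv1 : H₁ v = μ • v := by
    have := hw.1
    rw [Module.End.mem_eigenspace_iff] at this
    have := congrArg (Subtype.val) this
    simpa [hg, LinearMap.restrict_apply] using this
  have hv2 : H₂ v = (c - μ) • v := by
    have := hscalar v
    rw [hv1] at this
    have h2 : H₂ v = c • v - μ • v := by
      rw [← this]; abel
    rw [h2, sub_smul]
  -- Step 3: the span of v and F v is invariant, hence all of V
  set W : Submodule k V := Submodule.span k {v, F v} with hWdef
  have hvW : v ∈ W := Submodule.subset_span (by left; rfl)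
  have hFvW : F v ∈ W := Submodule.subset_span (by right; rfl)
  have hgen : ∀ (T : V →ₗ[k] V), T v ∈ W → T (F v) ∈ W → ∀ x ∈ W, T x ∈ W := by
    intro T h1 h2 x hx
    induction hx using Submodule.span_induction with
    | mem y hy =>
      rcases hy with h | h
      · rw [h]; exact h1
      · rw [Set.mem_singleton_iff] at h
        rw [h]; exact h2
    | zero => rw [map_zero]; exact W.zero_mem
    | add a b _ _ ha hb => rw [map_add]; exact W.add_mem ha hb
    | smul a x _ hx => rw [map_smul]; exact W.smul_mem a hx
  have h1Fv : H₁ (F v) = (μ - 1) • F v := by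
    rw [e1F, hv1, map_smul, sub_smul, one_smul]; abel
  have h2Fv : H₂ (F v) = (c - μ + 1) • F v := by
    rw [e2F, hv2, map_smul]
    rw [show (c - μ + 1 : k) = 1 + (c - μ) by ring, add_smul, one_smul]
  have hEFv : E (F v) = c • v := by
    have := eEF v
    rw [hvE, map_zero, add_zero, hscalar v] at this
    exact this
  have inv1 : ∀ x ∈ W, H₁ x ∈ W :=
    hgen H₁ (by rw [hv1]; exact W.smul_mem μ hvW)
      (by rw [h1Fv]; exact W.smul_mem _ hFvW)
  have inv2 : ∀ x ∈ W, H₂ x ∈ W :=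
    hgen H₂ (by rw [hv2]; exact W.smul_mem _ hvW)
      (by rw [h2Fv]; exact W.smul_mem _ hFvW)
  have invE : ∀ x ∈ W, E x ∈ W :=
    hgen E (by rw [hvE]; exact W.zero_mem)
      (by rw [hEFv]; exact W.smul_mem _ hvW)
  have invF : ∀ x ∈ W, F x ∈ W :=
    hgen F hFvW (by rw [eFF]; exact W.zero_mem)
  rcases hirr W inv1 inv2 invE invF with h | h
  · exact absurd (h ▸ hvW) (by simpa using hvne)
  · have : Module.finrank k V = Module.finrank k W := by
      rw [h, finrank_top]
    rw [this, hWdef]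
    classical
    refine (finrank_span_le_card _).trans ?_
    rw [Set.toFinset_insert, Set.toFinset_singleton]
    exact (Finset.card_insert_le _ _).trans (by simp)
end

section
/- Let k be an algebraically closed field of characteristic zero, V a 2-dimensional k-vector space, and H₁, H₂, E, F linear endomorphisms of V satisfying the gl(1|1) relations. Suppose V is irreducible (the only subspaces invariant under all four operators are 0 and V) and v ∈ V is a highest weight vector: v ≠ 0, H₁ v = r • v, H₂ v = s • v, and E v = 0 for some r, s ∈ k. Then: (i) F v ≠ 0 and {v, F v} is a basis of V; (ii) r + s ≠ 0; and (iii) the action in this basis is that of L(r,s), namely H₁(F v) = (r−1) • F v, H₂(F v) = (s+1) • F v, E(F v) = (r+s) • v, and F(F v) = 0. -/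
/-!
A 2-dimensional irreducible representation of `gl(1|1)` with a highest weight vector `v`
of weight `(r, s)` is isomorphic to `L(r,s)`: `{v, F v}` is a basis, `r + s ≠ 0`, and the
action of `H₁, H₂, E, F` in this basis is given by the matrices of `L(r,s)`.
-/

theorem gl11_two_dim_irreducible_is_L
    {k V : Type*} [Field k] [IsAlgClosed k] [CharZero k]
    [AddCommGroup V] [Module k V] [FiniteDimensional k V]
    (hdim : Module.finrank k V = 2)
    (H₁ H₂ E F : V →ₗ[k] V)
    (hComm : H₁ ∘ₗ H₂ = H₂ ∘ₗ H₁)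
    (h1E : H₁ ∘ₗ E - E ∘ₗ H₁ = E)
    (h2E : H₂ ∘ₗ E - E ∘ₗ H₂ = -E)
    (h1F : H₁ ∘ₗ F - F ∘ₗ H₁ = -F)
    (h2F : H₂ ∘ₗ F - F ∘ₗ H₂ = F)
    (hEF : E ∘ₗ F + F ∘ₗ E = H₁ + H₂)
    (hEE : E ∘ₗ E = 0)
    (hFF : F ∘ₗ F = 0)
    (hirr : ∀ W : Submodule k V,
      (∀ x ∈ W, H₁ x ∈ W) → (∀ x ∈ W, H₂ x ∈ W) →
      (∀ x ∈ W, E x ∈ W) → (∀ x ∈ W, F x ∈ W) → W = ⊥ ∨ W = ⊤)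
    (v : V) (r s : k)
    (hv : v ≠ 0) (hH1 : H₁ v = r • v) (hH2 : H₂ v = s • v) (hE : E v = 0) :
    F v ≠ 0 ∧
    LinearIndependent k ![v, F v] ∧ Submodule.span k {v, F v} = ⊤ ∧
    r + s ≠ 0 ∧
    H₁ (F v) = (r - 1) • F v ∧
    H₂ (F v) = (s + 1) • F v ∧
    E (F v) = (r + s) • v ∧
    F (F v) = 0 := by
  -- action formulas
  have e1 : H₁ (F v) = (r - 1) • F v := by
    have h := LinearMap.ext_iff.mp h1F v
    simp only [LinearMap.sub_apply, LinearMap.comp_apply, LinearMap.neg_apply] at h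
    rw [hH1, map_smul] at h
    rw [sub_smul, one_smul]
    linear_combination (norm := module) h
  have e2 : H₂ (F v) = (s + 1) • F v := by
    have h := LinearMap.ext_iff.mp h2F v
    simp only [LinearMap.sub_apply, LinearMap.comp_apply] at h
    rw [hH2, map_smul] at h
    rw [add_smul, one_smul]
    linear_combination (norm := module) h
  have e3 : E (F v) = (r + s) • v := by
    have h := LinearMap.ext_iff.mp hEF v
    simp only [LinearMap.add_apply, LinearMap.comp_apply] at h
    rw [hE, hH1, hH2, map_zero] at h
    rw [add_smul]
    linear_combination (norm := module) h
  have e4 : F (F v) = 0 := by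
    have h := LinearMap.ext_iff.mp hFF v
    simpa using h
  -- a general tool: an invariant line gives a contradiction
  have line : ∀ w : V, w ≠ 0 → H₁ w ∈ Submodule.span k {w} →
      H₂ w ∈ Submodule.span k {w} → E w ∈ Submodule.span k {w} →
      F w ∈ Submodule.span k {w} → False := by
    intro w hw m1 m2 m3 m4
    have hmem : ∀ (T : V →ₗ[k] V), T w ∈ Submodule.span k {w} →
        ∀ x ∈ Submodule.span k ({w} : Set V), T x ∈ Submodule.span k {w} := by
      intro T hT x hx
      rcases Submodule.mem_span_singleton.mp hx with ⟨c, rfl⟩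
      rw [map_smul]
      exact Submodule.smul_mem _ _ hT
    rcases hirr (Submodule.span k {w}) (hmem _ m1) (hmem _ m2) (hmem _ m3) (hmem _ m4) with h | h
    · have hwmem : w ∈ Submodule.span k ({w} : Set V) := Submodule.mem_span_singleton_self w
      rw [h] at hwmem
      exact hw ((Submodule.mem_bot k).mp hwmem)
    · have := finrank_span_singleton (K := k) hw
      rw [h] at this
      rw [finrank_top] at this
      omega
  -- F v ≠ 0
  have hFv : F v ≠ 0 := by
    intro h0
    refine line v hv ?_ ?_ ?_ ?_
    · rw [hH1]; exact Submodule.smul_mem _ _ (Submodule.mem_span_singleton_self v)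
    · rw [hH2]; exact Submodule.smul_mem _ _ (Submodule.mem_span_singleton_self v)
    · rw [hE]; exact Submodule.zero_mem _
    · rw [h0]; exact Submodule.zero_mem _
  -- r + s ≠ 0
  have hrs : r + s ≠ 0 := by
    intro h0
    refine line (F v) hFv ?_ ?_ ?_ ?_
    · rw [e1]; exact Submodule.smul_mem _ _ (Submodule.mem_span_singleton_self _)
    · rw [e2]; exact Submodule.smul_mem _ _ (Submodule.mem_span_singleton_self _)
    · rw [e3, h0, zero_smul]; exact Submodule.zero_mem _
    · rw [e4]; exact Submodule.zero_mem _
  -- linear independence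
  have hli : LinearIndependent k ![v, F v] := by
    rw [LinearIndependent.pair_iff]
    intro a b hab
    have h2 := congrArg H₁ hab
    rw [map_add, map_smul, map_smul, hH1, e1, map_zero] at h2
    have hb : b • F v = 0 := by
      linear_combination (norm := module) r • hab - h2
    have hb0 : b = 0 := by
      rcases smul_eq_zero.mp hb with h | h
      · exact h
      · exact absurd h hFv
    subst hb0
    rw [zero_smul, add_zero] at hab
    rcases smul_eq_zero.mp hab with h | h
    · exact ⟨h, rfl⟩
    · exact absurd h hv
  refine ⟨hFv, hli, ?_, hrs, e1, e2, e3, e4⟩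
  have hspan := hli.span_eq_top_of_card_eq_finrank (by simp [hdim])
  rw [show Set.range ![v, F v] = {v, F v} by
    ext x; simp [Matrix.range_cons, Matrix.range_empty, or_comm]] at hspan
  exact hspan
end

section
/- For every natural number n ≥ 1, the number of admissible subsets of {1, …, 2n} equals the central binomial coefficient: the cardinality of the set of subsets I ⊆ {1, …, 2n} such that 2·|I ∩ {1, …, m}| ≤ m for every m ∈ {1, …, 2n} is equal to C(2n, n). -/
/-!
Count admissible sets by size: let `B(k, j)` be the number of admissible subsets of `{1, …, k}`
with at most `j` elements. Splitting according to whether `k + 1` belongs to the set gives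
Pascal's rule `B(k + 1, j + 1) = B(k, j + 1) + B(k, j)` as long as `2 (j + 1) ≤ k + 1`, because
then the new condition at `m = k + 1` is implied by the size bound. Together with `B(k, 0) = 1`
and `B(2j + 1, j + 1) = B(2j + 1, j)` this yields `B(k, j) = C(k, j)` whenever `2 j ≤ k`.
An admissible subset of `{1, …, 2n}` has at most `n` elements, so the count is `B(2n, n)`.
-/

open Finset

def IsAdmissible (k : ℕ) (I : Finset ℕ) : Prop :=
  ∀ m ∈ Icc 1 k, 2 * #(I ∩ Icc 1 m) ≤ m

namespace IsAdmissible

variable {k : ℕ} {I : Finset ℕ}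

lemma two_mul_card_le (hI : I ⊆ Icc 1 k) (h : IsAdmissible k I) : 2 * #I ≤ k := by
  rcases Nat.eq_zero_or_pos k with rfl | hk
  · simp [subset_empty.mp (by simpa using hI)]
  · simpa [inter_eq_left.mpr hI] using h k (by simp; omega)

lemma succ_iff (hI : I ⊆ Icc 1 (k + 1)) :
    IsAdmissible (k + 1) I ↔ IsAdmissible k I ∧ 2 * #I ≤ k + 1 := by
  rw [IsAdmissible, ← insert_Icc_right_eq_Icc_add_one (by omega), forall_mem_insert,
    inter_eq_left.mpr hI, and_comm, IsAdmissible]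

lemma insert_succ_iff : IsAdmissible k (insert (k + 1) I) ↔ IsAdmissible k I := by
  refine forall₂_congr fun m hm => ?_
  rw [insert_inter_of_notMem (by simp at hm ⊢; omega)]

end IsAdmissible

open scoped Classical in
noncomputable def admissibleSetsOfCardLE (k j : ℕ) : Finset (Finset ℕ) :=
  {I ∈ (Icc 1 k).powerset | IsAdmissible k I ∧ #I ≤ j}

lemma admissibleSetsOfCardLE_zero (k : ℕ) : admissibleSetsOfCardLE k 0 = {∅} := by
  ext I
  simp only [admissibleSetsOfCardLE, mem_filter, mem_powerset, nonpos_iff_eq_zero, card_eq_zero,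
    mem_singleton]
  constructor
  · exact fun h => h.2.2
  · rintro rfl
    exact ⟨empty_subset _, fun m _ => by simp, rfl⟩

open scoped Classical in
lemma admissibleSetsOfCardLE_of_le {k j : ℕ} (h : k ≤ 2 * j + 1) :
    admissibleSetsOfCardLE k j = {I ∈ (Icc 1 k).powerset | IsAdmissible k I} := by
  refine filter_congr fun I hI => and_iff_left_of_imp fun hadm => ?_
  have := hadm.two_mul_card_le (mem_powerset.mp hI)
  omega

lemma card_admissibleSetsOfCardLE_succ_succ {k j : ℕ} (h : 2 * (j + 1) ≤ k + 1) :
    #(admissibleSetsOfCardLE (k + 1) (j + 1)) =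
      #(admissibleSetsOfCardLE k (j + 1)) + #(admissibleSetsOfCardLE k j) := by
  classical
  simp only [admissibleSetsOfCardLE, card_filter]
  rw [← insert_Icc_right_eq_Icc_add_one (by omega), sum_powerset_insert (by simp)]
  congr 1 <;> refine sum_congr rfl fun I hI => if_congr ?_ rfl rfl
  all_goals have hI : I ⊆ Icc 1 k := mem_powerset.mp hI
  · rw [IsAdmissible.succ_iff (hI.trans (Icc_subset_Icc_right (by omega)))]
    constructor
    · exact fun ⟨⟨hadm, _⟩, hcard⟩ => ⟨hadm, hcard⟩
    · exact fun ⟨hadm, hcard⟩ => ⟨⟨hadm, by omega⟩, hcard⟩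
  · have hk : k + 1 ∉ I := fun hk => by simpa using hI hk
    rw [IsAdmissible.succ_iff
        (insert_subset (by simp) (hI.trans (Icc_subset_Icc_right (by omega)))),
      IsAdmissible.insert_succ_iff, card_insert_of_notMem hk]
    constructor
    · exact fun ⟨⟨hadm, _⟩, hcard⟩ => ⟨hadm, by omega⟩
    · exact fun ⟨hadm, hcard⟩ => ⟨⟨hadm, by omega⟩, by omega⟩

lemma card_admissibleSetsOfCardLE {k j : ℕ} (h : 2 * j ≤ k) :
    #(admissibleSetsOfCardLE k j) = k.choose j := by
  induction k generalizing j with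
  | zero =>
    obtain rfl : j = 0 := by omega
    simp [admissibleSetsOfCardLE_zero]
  | succ k ih =>
    rcases j with _ | j
    · simp [admissibleSetsOfCardLE_zero]
    have hsucc : #(admissibleSetsOfCardLE k (j + 1)) = k.choose (j + 1) := by
      rcases Nat.lt_or_ge k (2 * (j + 1)) with hk | hk
      · obtain rfl : k = 2 * j + 1 := by omega
        rw [admissibleSetsOfCardLE_of_le (j := j + 1) (by omega),
          ← admissibleSetsOfCardLE_of_le (j := j) le_rfl,
          ih (by omega), Nat.choose_symm_half]
      · exact ih hk
    rw [card_admissibleSetsOfCardLE_succ_succ h, hsucc, ih (by omega), Nat.choose_succ_succ',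
      add_comm]

open scoped Classical in
theorem card_admissible_subsets_general (n : ℕ) :
    ((Finset.Icc 1 (2 * n)).powerset.filter
        (fun I => ∀ m ∈ Finset.Icc 1 (2 * n),
          2 * (I ∩ Finset.Icc 1 m).card ≤ m)).card
      = Nat.choose (2 * n) n := by
  rw [← card_admissibleSetsOfCardLE (k := 2 * n) le_rfl, admissibleSetsOfCardLE_of_le (by omega)]
  rfl

open scoped Classical in
theorem card_admissible_subsets (n : ℕ) (hn : 1 ≤ n) :
    ((Finset.Icc 1 (2 * n)).powerset.filter
        (fun I => ∀ m ∈ Finset.Icc 1 (2 * n),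
          2 * (I ∩ Finset.Icc 1 m).card ≤ m)).card
      = Nat.choose (2 * n) n :=
  card_admissible_subsets_general n
end

section
/- Let n ≥ 1 and let I ⊆ {1, …, 2n}. Then I is admissible (i.e. 2·|I ∩ {1, …, m}| ≤ m for every m ∈ {1, …, 2n}) if and only if there exists an injective function φ : I → {1, …, 2n} \ I such that φ(i) < i for every i ∈ I. (This is the combinatorial content of the bijection between admissible subsets and generalized cup diagrams: the right endpoints of cups can be matched injectively to earlier free points.) -/
/-!
A subset `I ⊆ {1, …, 2n}` is admissible if `2 * |I ∩ {1, …, m}| ≤ m` for every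
`m ∈ {1, …, 2n}`.  This holds if and only if the elements of `I` (the right endpoints of
the cups of a generalized cup diagram) can be matched injectively to strictly earlier
points of `{1, …, 2n} \ I`.
-/

theorem admissible_iff_injective_matching (n : ℕ) (hn : 1 ≤ n)
    (I : Finset ℕ) (hI : I ⊆ Finset.Icc 1 (2 * n)) :
    (∀ m ∈ Finset.Icc 1 (2 * n), 2 * (I ∩ Finset.Icc 1 m).card ≤ m) ↔
      ∃ φ : ℕ → ℕ, Set.InjOn φ ↑I ∧
        ∀ i ∈ I, φ i ∈ Finset.Icc 1 (2 * n) \ I ∧ φ i < i := by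
  constructor
  · intro hadm
    -- Hall's theorem with neighborhoods t i = Icc 1 (i-1) \ I
    set t : ↥I → Finset ℕ := fun i => Finset.Icc 1 ((i : ℕ) - 1) \ I with ht
    have hall : ∀ s : Finset ↥I, s.card ≤ (s.biUnion t).card := by
      intro s
      rcases s.eq_empty_or_nonempty with rfl | hs
      · simp
      · set S : Finset ℕ := s.image Subtype.val with hS
        have hSne : S.Nonempty := hs.image _
        set m : ℕ := S.max' hSne with hm
        have hmS : m ∈ S := S.max'_mem hSne
        obtain ⟨a, has, hav⟩ := Finset.mem_image.mp hmS
        have hmI : m ∈ I := by rw [← hav]; exact a.2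
        have hm1 : 1 ≤ m := (Finset.mem_Icc.mp (hI hmI)).1
        have hm2n : m ∈ Finset.Icc 1 (2 * n) := hI hmI
        -- s.card = S.card ≤ (I ∩ Icc 1 m).card
        have hcardS : S.card = s.card := Finset.card_image_of_injective _ Subtype.val_injective
        have hsub : S ⊆ I ∩ Finset.Icc 1 m := by
          intro x hx
          obtain ⟨b, hbs, hbv⟩ := Finset.mem_image.mp hx
          have hxI : x ∈ I := by rw [← hbv]; exact b.2
          have hx1 : 1 ≤ x := (Finset.mem_Icc.mp (hI hxI)).1
          exact Finset.mem_inter.mpr ⟨hxI, Finset.mem_Icc.mpr ⟨hx1, S.le_max' x hx⟩⟩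
        have h1 : s.card ≤ (I ∩ Finset.Icc 1 m).card := by
          rw [← hcardS]; exact Finset.card_le_card hsub
        -- biUnion contains Icc 1 (m-1) \ I
        have hsub2 : Finset.Icc 1 (m - 1) \ I ⊆ s.biUnion t := by
          intro x hx
          apply Finset.mem_biUnion.mpr
          refine ⟨a, has, ?_⟩
          rw [ht]
          simpa [hav] using hx
        have h2 : (Finset.Icc 1 (m - 1) \ I).card ≤ (s.biUnion t).card :=
          Finset.card_le_card hsub2
        -- counting
        have hins : Finset.Icc 1 m = insert m (Finset.Icc 1 (m - 1)) := by
          ext x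
          simp only [Finset.mem_Icc, Finset.mem_insert]
          omega
        have hmnot : m ∉ Finset.Icc 1 (m - 1) ∩ I := by
          simp only [Finset.mem_inter, Finset.mem_Icc]
          omega
        have hcount : (I ∩ Finset.Icc 1 m).card
            = (Finset.Icc 1 (m - 1) ∩ I).card + 1 := by
          rw [Finset.inter_comm, hins]
          rw [Finset.insert_inter_of_mem hmI, Finset.card_insert_of_notMem hmnot]
        have hsplit : (Finset.Icc 1 (m - 1) ∩ I).card + (Finset.Icc 1 (m - 1) \ I).card
            = m - 1 := by
          rw [Finset.card_inter_add_card_sdiff, Nat.card_Icc]; omega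
        have hA := hadm m hm2n
        omega
    obtain ⟨f, hfinj, hft⟩ :=
      (Finset.all_card_le_biUnion_card_iff_exists_injective t).mp hall
    classical
    refine ⟨fun i => if h : i ∈ I then f ⟨i, h⟩ else 0, ?_, ?_⟩
    · intro x hx y hy hxy
      rw [Finset.mem_coe] at hx hy
      simp only [dif_pos hx, dif_pos hy] at hxy
      have := hfinj hxy
      exact Subtype.ext_iff.mp this
    · intro i hi
      simp only [dif_pos hi]
      have := hft ⟨i, hi⟩
      rw [ht] at this
      simp only [Finset.mem_sdiff, Finset.mem_Icc] at this
      have hi1 : 1 ≤ i := (Finset.mem_Icc.mp (hI hi)).1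
      have hi2n : i ≤ 2 * n := (Finset.mem_Icc.mp (hI hi)).2
      refine ⟨Finset.mem_sdiff.mpr ⟨Finset.mem_Icc.mpr ⟨this.1.1, ?_⟩, this.2⟩, ?_⟩
      · omega
      · omega
  · intro ⟨φ, hinj, hφ⟩ m hm
    have hmap : Finset.image φ (I ∩ Finset.Icc 1 m) ⊆ Finset.Icc 1 m \ I := by
      intro y hy
      obtain ⟨x, hx, rfl⟩ := Finset.mem_image.mp hy
      obtain ⟨hxI, hxm⟩ := Finset.mem_inter.mp hx
      obtain ⟨hφx, hlt⟩ := hφ x hxI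
      rw [Finset.mem_sdiff, Finset.mem_Icc] at hφx ⊢
      refine ⟨⟨hφx.1.1, ?_⟩, hφx.2⟩
      have := (Finset.mem_Icc.mp hxm).2
      omega
    have hcard : (I ∩ Finset.Icc 1 m).card = (Finset.image φ (I ∩ Finset.Icc 1 m)).card := by
      rw [Finset.card_image_of_injOn]
      intro x hx y hy hxy
      exact hinj (Finset.mem_coe.mpr (Finset.mem_inter.mp hx).1)
        (Finset.mem_coe.mpr (Finset.mem_inter.mp hy).1) hxy
    have h1 : (I ∩ Finset.Icc 1 m).card ≤ (Finset.Icc 1 m \ I).card := by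
      rw [hcard]; exact Finset.card_le_card hmap
    have h2 : (I ∩ Finset.Icc 1 m).card + (Finset.Icc 1 m \ I).card = m := by
      rw [Finset.inter_comm, Finset.card_inter_add_card_sdiff, Nat.card_Icc]; omega
    omega
end
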